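/- Let Erfc : ℂ → ℂ be the entire function Erfc(z) = √π/2 − ∫_{[0,z]} e^{−w²} dw (the integral of e^{−w²} along the segment from 0 to z), which agrees with ∫_t^∞ e^{−v²}dv for real z = t. Then for all real x > 0, y > 0 and every μ with 0 < μ < 1: |Erfc(x + iy)| ≥ ∫_0^y e^{−x²y²/t² + t²} dt ≥ (1 − μ) y e^{−μ^{−2} x² + μ² y²}. -/

import Mathlib

/-!
Along the hyperbola `γ s = xy/s + i s` through `x + iy` one has
`-γ(s)² = -x²y²/s² + s² - 2ixy`, so `e^{-γ²}` has constant phase and modulus the integrand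
`e^{-x²y²/s² + s²}`. Since `Erfc' = -e^{-z²}` and `Erfc (γ s) → 0` as `s → 0⁺` (the hyperbola
escapes to `+∞` along the real axis), integrating along it gives
`Erfc(x + iy) = e^{-2ixy} ∫_0^y e^{-x²y²/t² + t²} (xy/t² - i) dt`,
whose modulus is at least the modulus of its imaginary part. The second bound holds because the
integrand is increasing in `t`, hence at least its value at `μy` on `(μy, y)`.
-/

/-- The entire complementary error function
`Erfc(z) = √π/2 - ∫_{[0,z]} e^{-w²} dw`, the integral being taken along the
segment from `0` to `z`, parametrized by `w = t z`, `t ∈ [0,1]`. -/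
noncomputable def CErfc (z : ℂ) : ℂ :=
  (Real.sqrt Real.pi : ℂ) / 2 - ∫ t in (0:ℝ)..1, z * Complex.exp (-((t : ℂ) * z) ^ 2)

open MeasureTheory Set Filter Complex
open scoped Topology

theorem integral_smul_comp_mul_eq_sub {E : Type*} [NormedAddCommGroup E] [NormedSpace ℂ E]
    [CompleteSpace E] {G g : ℂ → E} (hG : ∀ w, HasDerivAt G (g w) w) (hg : Continuous g)
    (z : ℂ) : ∫ t in (0:ℝ)..1, z • g (t * z) = G z - G 0 := by
  have hline (t : ℝ) : HasDerivAt (fun t : ℝ => (t : ℂ) * z) z t := by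
    simpa using (hasDerivAt_id t).ofReal_comp.mul_const z
  rw [intervalIntegral.integral_eq_sub_of_hasDerivAt (f := fun t : ℝ => G (t * z))
    (fun t _ => (hG _).scomp t (hline t)) (Continuous.intervalIntegrable (by fun_prop) _ _)]
  simp

theorem exists_primitive_exp_neg_sq :
    ∃ G : ℂ → ℂ, G 0 = 0 ∧ ∀ w, HasDerivAt G (exp (-w ^ 2)) w := by
  obtain ⟨G, hG0, hG⟩ :=
    (Differentiable.isExactOn_univ (f := fun w => exp (-w ^ 2)) (by fun_prop)).with_val_at 0 0
  exact ⟨G, hG0, fun w => hG w (mem_univ w)⟩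

theorem CErfc_eq_sub_of_hasDerivAt {G : ℂ → ℂ} (hG0 : G 0 = 0)
    (hG : ∀ w, HasDerivAt G (exp (-w ^ 2)) w) (z : ℂ) :
    CErfc z = Real.sqrt Real.pi / 2 - G z := by
  have := integral_smul_comp_mul_eq_sub hG (by fun_prop) z
  simp only [smul_eq_mul, hG0, sub_zero] at this
  rw [CErfc, this]

theorem hasDerivAt_CErfc (z : ℂ) : HasDerivAt CErfc (-exp (-z ^ 2)) z := by
  obtain ⟨G, hG0, hG⟩ := exists_primitive_exp_neg_sq
  rw [funext (CErfc_eq_sub_of_hasDerivAt hG0 hG)]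
  exact (hG z).const_sub _

theorem tendsto_CErfc_ofReal_atTop : Tendsto (fun a : ℝ => CErfc a) atTop (𝓝 0) := by
  obtain ⟨G, hG0, hG⟩ := exists_primitive_exp_neg_sq
  have hG_real (a : ℝ) : G a = ↑(∫ u in (0:ℝ)..a, Real.exp (-u ^ 2)) := by
    have h := intervalIntegral.integral_eq_sub_of_hasDerivAt (f := fun u : ℝ => G u)
      (fun u _ => (hG u).comp_ofReal) (Continuous.intervalIntegrable (by fun_prop) 0 a)
    rw [ofReal_zero, hG0, sub_zero] at h
    rw [← h, ← intervalIntegral.integral_ofReal]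
    push_cast
    rfl
  have hgauss : Tendsto (fun a => ∫ u in (0:ℝ)..a, Real.exp (-u ^ 2)) atTop
      (𝓝 (Real.sqrt Real.pi / 2)) := by
    have h := intervalIntegral_tendsto_integral_Ioi 0
      ((integrable_exp_neg_mul_sq one_pos).integrableOn (s := Ioi 0)) tendsto_id
    have hval := integral_gaussian_Ioi 1
    simp only [neg_mul, one_mul, div_one] at hval
    simp only [neg_mul, one_mul, id_eq] at h
    rwa [hval] at h
  have h := ((continuous_ofReal.tendsto _).comp hgauss).const_sub (Real.sqrt Real.pi / 2 : ℂ)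
  simpa [Function.comp_def, CErfc_eq_sub_of_hasDerivAt hG0 hG, hG_real] using h

theorem norm_CErfc_add_mul_I_sub_le (a : ℝ) {b : ℝ} (hb : 0 ≤ b) :
    ‖CErfc (a + b * I) - CErfc a‖ ≤ Real.exp (b ^ 2) * b := by
  have hvert (τ : ℝ) : HasDerivAt (fun τ : ℝ => (a : ℂ) + τ * I) I τ := by
    simpa using ((hasDerivAt_id τ).ofReal_comp.mul_const I).const_add (a : ℂ)
  have hderiv (τ : ℝ) : HasDerivAt (fun τ : ℝ => CErfc (a + τ * I))
      (I • -exp (-(a + τ * I) ^ 2)) τ :=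
    (hasDerivAt_CErfc _).scomp τ (hvert τ)
  have hbound : ∀ τ ∈ Ico 0 b, ‖I • -exp (-((a : ℂ) + τ * I) ^ 2)‖ ≤ Real.exp (b ^ 2) := by
    intro τ hτ
    rw [norm_smul, norm_neg, norm_I, one_mul, norm_exp, Real.exp_le_exp]
    have hre : (-((a : ℂ) + τ * I) ^ 2).re = τ ^ 2 - a ^ 2 := by simp [sq]
    rw [hre]
    nlinarith [hτ.1, hτ.2]
  simpa using norm_image_sub_le_of_norm_deriv_le_segment'
    (fun τ _ => (hderiv τ).hasDerivWithinAt) hbound b (right_mem_Icc.mpr hb)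

theorem tendsto_CErfc_hyperbola {c : ℝ} (hc : 0 < c) :
    Tendsto (fun s : ℝ => CErfc (↑(c / s) + ↑s * I)) (𝓝[>] 0) (𝓝 0) := by
  have hreal : Tendsto (fun s : ℝ => CErfc ↑(c / s)) (𝓝[>] 0) (𝓝 0) :=
    tendsto_CErfc_ofReal_atTop.comp (by
      simpa only [div_eq_mul_inv] using tendsto_inv_nhdsGT_zero.const_mul_atTop hc :
        Tendsto (fun s : ℝ => c / s) (𝓝[>] 0) atTop)
  have hvert : Tendsto (fun s : ℝ => CErfc (↑(c / s) + ↑s * I) - CErfc ↑(c / s))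
      (𝓝[>] 0) (𝓝 0) := by
    refine squeeze_zero_norm' ?_ (tendsto_nhdsWithin_of_tendsto_nhds
      (f := fun s : ℝ => Real.exp (s ^ 2) * s) (by simpa using (by fun_prop : Continuous
        (fun s : ℝ => Real.exp (s ^ 2) * s)).tendsto 0))
    filter_upwards [self_mem_nhdsWithin] with s hs
    exact norm_CErfc_add_mul_I_sub_le _ (le_of_lt hs)
  simpa using hvert.add hreal

noncomputable def hyperbolaIntegrand (c t : ℝ) : ℂ :=
  Real.exp (-(c ^ 2 / t ^ 2) + t ^ 2) * (↑(c / t ^ 2) - I)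

theorem exp_neg_sq_hyperbola (c : ℝ) {s : ℝ} (hs : s ≠ 0) :
    exp (-(↑(c / s) + ↑s * I) ^ 2)
      = exp (↑(-2 * c) * I) * Real.exp (-(c ^ 2 / s ^ 2) + s ^ 2) := by
  have hs' : (s : ℂ) ≠ 0 := ofReal_ne_zero.mpr hs
  rw [ofReal_exp, ← Complex.exp_add]
  congr 1
  push_cast
  field_simp
  linear_combination (-(s : ℂ) ^ 4) * I_sq

theorem hasDerivAt_CErfc_hyperbola (c : ℝ) {s : ℝ} (hs : s ≠ 0) :
    HasDerivAt (fun s : ℝ => CErfc (↑(c / s) + ↑s * I))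
      (exp (↑(-2 * c) * I) * hyperbolaIntegrand c s) s := by
  have hpath : HasDerivAt (fun s : ℝ => (↑(c / s) : ℂ) + ↑s * I) (↑(-(c / s ^ 2)) + I) s := by
    have hinv : HasDerivAt (fun s : ℝ => c / s) (-(c / s ^ 2)) s := by
      simpa [div_eq_mul_inv] using (hasDerivAt_inv hs).const_mul c
    have h := hinv.ofReal_comp.add ((hasDerivAt_id s).ofReal_comp.mul_const I)
    rwa [ofReal_one, one_mul] at h
  refine ((hasDerivAt_CErfc _).scomp s hpath).congr_deriv ?_
  rw [smul_eq_mul, exp_neg_sq_hyperbola c hs, hyperbolaIntegrand]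
  push_cast
  ring

theorem norm_hyperbolaIntegrand_le {c t y : ℝ} (hc : 0 < c) (ht : 0 < t) (hty : t ≤ y) :
    ‖hyperbolaIntegrand c t‖ ≤ Real.exp (y ^ 2) * (1 / c + 1) := by
  set u := c ^ 2 / t ^ 2
  have hu : 0 ≤ u := by positivity
  have hnorm : ‖hyperbolaIntegrand c t‖
      ≤ Real.exp (t ^ 2) * (u * Real.exp (-u) / c + Real.exp (-u)) := by
    rw [hyperbolaIntegrand, norm_mul, norm_real, Real.norm_of_nonneg (Real.exp_pos _).le]
    calc _ ≤ Real.exp (-u + t ^ 2) * (c / t ^ 2 + 1) := by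
          gcongr
          refine (norm_sub_le _ _).trans_eq ?_
          rw [norm_real, norm_I, Real.norm_of_nonneg (by positivity)]
      _ = _ := by
          rw [Real.exp_add]
          simp only [u]
          field_simp
  have hue : u * Real.exp (-u) ≤ 1 :=
    (Real.mul_exp_neg_le_exp_neg_one u).trans (by simp)
  have hexp : Real.exp (-u) ≤ 1 := Real.exp_le_one_iff.mpr (by linarith)
  refine hnorm.trans ?_
  gcongr

theorem intervalIntegrable_hyperbolaIntegrand {c y : ℝ} (hc : 0 < c) (hy : 0 ≤ y) :
    IntervalIntegrable (hyperbolaIntegrand c) volume 0 y := by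
  rw [intervalIntegrable_iff_integrableOn_Ioc_of_le hy]
  refine Integrable.of_bound (by unfold hyperbolaIntegrand; fun_prop)
    (Real.exp (y ^ 2) * (1 / c + 1))
    ((ae_restrict_iff' measurableSet_Ioc).mpr (ae_of_all _ fun t ht => ?_))
  exact norm_hyperbolaIntegrand_le hc ht.1 ht.2

theorem CErfc_hyperbola_eq_integral {c y : ℝ} (hc : 0 < c) (hy : 0 < y) :
    CErfc (↑(c / y) + ↑y * I)
      = exp (↑(-2 * c) * I) * ∫ t in (0:ℝ)..y, hyperbolaIntegrand c t := by
  have h := intervalIntegral.integral_eq_sub_of_hasDerivAt_of_tendsto hy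
    (fun s hs => hasDerivAt_CErfc_hyperbola c hs.1.ne')
    ((intervalIntegrable_hyperbolaIntegrand hc hy.le).const_mul _) (tendsto_CErfc_hyperbola hc)
    (hasDerivAt_CErfc_hyperbola c hy.ne').continuousAt.continuousWithinAt
  rw [intervalIntegral.integral_const_mul, sub_zero] at h
  exact h.symm

theorem integral_le_norm_CErfc_hyperbola {c y : ℝ} (hc : 0 < c) (hy : 0 < y) :
    ∫ t in Ioo 0 y, Real.exp (-(c ^ 2 / t ^ 2) + t ^ 2) ≤ ‖CErfc (↑(c / y) + ↑y * I)‖ := by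
  have him : (∫ t in (0:ℝ)..y, hyperbolaIntegrand c t).im
      = -∫ t in Ioo 0 y, Real.exp (-(c ^ 2 / t ^ 2) + t ^ 2) := by
    have hint := (intervalIntegrable_iff_integrableOn_Ioo_of_le hy.le).mp
      (intervalIntegrable_hyperbolaIntegrand hc hy.le)
    rw [intervalIntegral.integral_of_le hy.le, integral_Ioc_eq_integral_Ioo,
      ← RCLike.im_eq_complex_im, ← integral_im hint, ← integral_neg]
    congr 1 with t
    simp only [RCLike.im_to_complex, hyperbolaIntegrand, mul_im, sub_re, sub_im, ofReal_re,
      ofReal_im, I_re, I_im]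
    ring
  rw [CErfc_hyperbola_eq_integral hc hy, norm_mul, norm_exp_ofReal_mul_I, one_mul]
  calc _ ≤ |(∫ t in (0:ℝ)..y, hyperbolaIntegrand c t).im| := by
        rw [him, abs_neg]; exact le_abs_self _
    _ ≤ _ := abs_im_le_norm _

theorem sub_mul_exp_le_integral (c : ℝ) {a y : ℝ} (ha : 0 < a) (hay : a ≤ y) :
    (y - a) * Real.exp (-(c ^ 2 / a ^ 2) + a ^ 2)
      ≤ ∫ t in Ioo 0 y, Real.exp (-(c ^ 2 / t ^ 2) + t ^ 2) := by
  have hint : IntegrableOn (fun t => Real.exp (-(c ^ 2 / t ^ 2) + t ^ 2)) (Ioo 0 y) := by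
    refine Integrable.of_bound (by fun_prop) (Real.exp (y ^ 2))
      ((ae_restrict_iff' measurableSet_Ioo).mpr (ae_of_all _ fun t ht => ?_))
    rw [Real.norm_of_nonneg (Real.exp_pos _).le, Real.exp_le_exp]
    have : 0 ≤ c ^ 2 / t ^ 2 := by positivity
    nlinarith [ht.1, ht.2]
  have hsub : Ioo a y ⊆ Ioo 0 y := Ioo_subset_Ioo_left ha.le
  calc (y - a) * Real.exp (-(c ^ 2 / a ^ 2) + a ^ 2)
      = ∫ _ in Ioo a y, Real.exp (-(c ^ 2 / a ^ 2) + a ^ 2) := by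
        rw [setIntegral_const, measureReal_def, Real.volume_Ioo,
          ENNReal.toReal_ofReal (sub_nonneg.mpr hay), smul_eq_mul]
    _ ≤ ∫ t in Ioo a y, Real.exp (-(c ^ 2 / t ^ 2) + t ^ 2) := by
        refine setIntegral_mono_on (integrableOn_const measure_Ioo_lt_top.ne)
          (hint.mono_set hsub) measurableSet_Ioo fun t ht => ?_
        have hat : a ^ 2 ≤ t ^ 2 := pow_le_pow_left₀ ha.le ht.1.le 2
        gcongr
    _ ≤ ∫ t in Ioo 0 y, Real.exp (-(c ^ 2 / t ^ 2) + t ^ 2) :=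
        setIntegral_mono_set hint (ae_of_all _ fun _ => (Real.exp_pos _).le)
          hsub.eventuallyLE

/-- Lower bounds for `|Erfc(x+iy)|` in the upper right quadrant:
`|Erfc(x+iy)| ≥ ∫_0^y e^{-x²y²/t² + t²} dt ≥ (1-μ) y e^{-μ⁻²x² + μ²y²}`. -/
theorem statement18 :
    ∀ x y μ : ℝ, 0 < x → 0 < y → 0 < μ → μ < 1 →
      (∫ t in Set.Ioo (0:ℝ) y, Real.exp (-(x ^ 2 * y ^ 2 / t ^ 2) + t ^ 2))
          ≤ ‖CErfc (x + y * Complex.I)‖ ∧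
      (1 - μ) * y * Real.exp (-(x ^ 2 / μ ^ 2) + μ ^ 2 * y ^ 2)
          ≤ ∫ t in Set.Ioo (0:ℝ) y, Real.exp (-(x ^ 2 * y ^ 2 / t ^ 2) + t ^ 2) := by
  intro x y μ hx hy hμ hμ1
  simp_rw [← mul_pow]
  constructor
  · simpa [mul_div_cancel_right₀ x hy.ne'] using
      integral_le_norm_CErfc_hyperbola (mul_pos hx hy) hy
  · convert sub_mul_exp_le_integral (x * y) (mul_pos hμ hy)
      (mul_le_of_le_one_left hy.le hμ1.le) using 1
    field_simp
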